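/- Let F_q be a finite field of odd characteristic and let h, s be positive integers such that h divides q − 1 and s ≤ h < 2s. Let C_1,…,C_s be nonzero linear codes in F_q^m with dim(C_i) = k_i and minimum distance d_i, satisfying C_{h−s+1} ⊇ C_{h−s+2} ⊇ ⋯ ⊇ C_s ⊇ C_s^{⊥E}, and C_1 = ⋯ = C_{h−s} = F_q^m whenever s < h. Then there exists a non-singular by columns (NSC) s×h matrix Ȧ over F_q such that the matrix-product code C = [C_1,…,C_s]·Ȧ is Euclidean dual-containing, has length hm, dimension Σ_{i=1}^s k_i, and minimum distance d(C) ≥ min{ h d_1, (h−1) d_2, …, (h+1−s) d_s }. -/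

import Mathlib

/-- Minimum distance (minimum Hamming weight of a nonzero element) of a set of vectors. -/
noncomputable def dminS {F : Type*} [DecidableEq F] [Zero F] {n : Type*} [Fintype n]
    (C : Set (n → F)) : ℕ :=
  sInf { w | ∃ c ∈ C, c ≠ 0 ∧ hammingNorm c = w }

/-- Euclidean dual of a set of vectors. -/
def dualE {F : Type*} [Field F] {n : Type*} [Fintype n] (C : Set (n → F)) : Set (n → F) :=
  { x | ∀ c ∈ C, ∑ j, x j * c j = 0 }

/-- Hermitian dual (with respect to x ↦ x^q) of a set of vectors over F_{q^2}. -/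
def dualH {F : Type*} [Field F] {n : Type*} [Fintype n] (q : ℕ) (C : Set (n → F)) :
    Set (n → F) :=
  { x | ∀ c ∈ C, ∑ j, x j * (c j) ^ q = 0 }

/-- The matrix-product code `[C_1,…,C_s]·A` as a set of vectors indexed by `Fin h × Fin m`. -/
def mpcSet {F : Type*} [Field F] {s h m : ℕ}
    (C : Fin s → Set (Fin m → F)) (A : Matrix (Fin s) (Fin h) F) :
    Set (Fin h × Fin m → F) :=
  { p | ∃ v : Fin s → Fin m → F, (∀ i, v i ∈ C i) ∧ ∀ x, p x = ∑ i, A i x.1 * v i x.2 }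

/-- A matrix is non-singular by columns. -/
def IsNSC {F : Type*} [Field F] {s h : ℕ} (A : Matrix (Fin s) (Fin h) F) : Prop :=
  ∀ (i : ℕ) (hi : i ≤ s), 0 < i → ∀ c : Fin i → Fin h, StrictMono c →
    (Matrix.of fun r t : Fin i => A (Fin.castLE hi r) (c t)).det ≠ 0

/-- Punctured code: projection of `C` onto the coordinates in `R`. -/
def punct {F : Type*} {n : Type*} (C : Set (n → F)) (R : Finset n) :
    Set ({x // x ∈ R} → F) :=
  (fun c (t : {x // x ∈ R}) => c t.1) '' C

/-- `R` is an (r,δ)-extended recovery set for coordinate `i` of the code `C`. -/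
def IsRecSet {F : Type*} [DecidableEq F] [Zero F] {n : Type*} [Fintype n]
    (C : Set (n → F)) (r δ : ℕ) (i : n) (R : Finset n) : Prop :=
  i ∈ R ∧ R.card ≤ r + δ - 1 ∧ δ ≤ dminS (punct C R)

/-- `C` is a locally recoverable code with locality (r,δ). -/
def IsLRC {F : Type*} [DecidableEq F] [Zero F] {n : Type*} [Fintype n]
    (C : Set (n → F)) (r δ : ℕ) : Prop :=
  ∀ i : n, ∃ R : Finset n, IsRecSet C r δ i R

/-- `wv α i` is the evaluation of the monomial `X^(i-1)` at all points of the field,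
enumerated by `α`. -/
def wv {F : Type*} [Field F] {q : ℕ} (α : Fin q ≃ F) (i : ℕ) : Fin q → F :=
  fun j => (α j) ^ (i - 1)

/-- `av α p i` : the vectors `a_i`, with `a_i = w_i` for `i < q` and
`a_q = w_q + ((p-1)/2) • w_1`. -/
def av {F : Type*} [Field F] {q : ℕ} (α : Fin q ≃ F) (p : ℕ) (i : ℕ) : Fin q → F :=
  if i = q then wv α q + (((p - 1) / 2 : ℕ) : F) • wv α 1 else wv α i

/-- The square matrix whose rows are `a_1, …, a_q`. -/
def Adot {F : Type*} [Field F] {q : ℕ} (α : Fin q ≃ F) (p : ℕ) : Matrix (Fin q) (Fin q) F :=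
  Matrix.of fun r j => av α p ((r : ℕ) + 1) j

/-!
Take `A = (ζ ^ (e_i * j))` with `ζ` a primitive `h`-th root of unity, which exists because
`h ∣ q - 1`, and exponents `e_i ∈ ZMod h` whose first `i` values always form an interval. Every
minor of `A` on its first `i` rows is then a Vandermonde determinant up to row permutation and
column scaling, so `A` is NSC; for NSC matrices the dimension count and the bound
`d ≥ min (h - i) d_i` are general facts.

For dual containment, Fourier-transform a vector `x` orthogonal to the code along the `h` blocks.
Its transform at `e_i` is orthogonal to `C_i`, and Fourier inversion writes `x` as
`[v_1, …, v_s] · A` with `v_i` the transform at `-e_i`. Each `v_i` lies in `C_i`: trivially when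
`C_i` is full, and otherwise `-e_i = e_{i'}` with `C_{i'}^⊥ ⊆ C_s^⊥ ⊆ C_s ⊆ C_i`. Frequencies `-f`
with `f` not an exponent contribute nothing, since `-f` is then the exponent of a full code,
whose dual is zero.
-/

open Finset Matrix

section MatrixProductCode

variable {F : Type*} [Field F] {s h m : ℕ}

lemma exists_last_ne_zero {M : Type*} [Zero M] {y : Fin s → M} (hy : y ≠ 0) :
    ∃ ℓ, y ℓ ≠ 0 ∧ ∀ i, ℓ < i → y i = 0 := by
  classical
  have hne : ({i | y i ≠ 0} : Finset (Fin s)).Nonempty := by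
    obtain ⟨i, hi⟩ := Function.ne_iff.1 hy
    exact ⟨i, mem_filter.2 ⟨mem_univ i, hi⟩⟩
  refine ⟨_, (mem_filter.1 (max'_mem _ hne)).2, fun i hi => ?_⟩
  by_contra hyi
  exact (le_max' _ i (mem_filter.2 ⟨mem_univ i, hyi⟩)).not_gt hi

lemma dminS_le_hammingNorm {n : Type*} [Fintype n] [DecidableEq F] {S : Set (n → F)}
    {c : n → F} (hc : c ∈ S) (hc0 : c ≠ 0) : dminS S ≤ hammingNorm c :=
  Nat.sInf_le ⟨c, hc, hc0, rfl⟩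

lemma le_dminS {n : Type*} [Fintype n] [DecidableEq F] {S : Set (n → F)} {w : ℕ}
    (hS : ∃ c ∈ S, c ≠ 0) (hw : ∀ c ∈ S, c ≠ 0 → w ≤ hammingNorm c) : w ≤ dminS S := by
  obtain ⟨c, hc, hc0⟩ := hS
  exact le_csInf ⟨_, c, hc, hc0, rfl⟩ fun _ ⟨c, hc, hc0, hwc⟩ => hwc ▸ hw c hc hc0

lemma hammingNorm_eq_sum_hammingNorm_col [DecidableEq F] (p : Fin h × Fin m → F) :
    hammingNorm p = ∑ t, hammingNorm fun j => p (j, t) := by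
  simp only [hammingNorm, card_filter, Fintype.sum_prod_type]
  exact sum_comm

lemma dualE_anti {n : Type*} [Fintype n] {S T : Set (n → F)} (hST : S ⊆ T) :
    dualE T ⊆ dualE S :=
  fun _ hx c hc => hx c (hST hc)

lemma eq_zero_of_mem_dualE_univ {n : Type*} [Fintype n] [DecidableEq n] {x : n → F}
    (hx : x ∈ dualE (Set.univ : Set (n → F))) : x = 0 := by
  funext t
  simpa [Pi.single_apply] using hx (Pi.single t 1) trivial

def mpcMap (A : Matrix (Fin s) (Fin h) F) : (Fin s → Fin m → F) →ₗ[F] (Fin h × Fin m → F) where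
  toFun v p := ∑ i, A i p.1 * v i p.2
  map_add' v w := by ext p; simp [mul_add, sum_add_distrib]
  map_smul' c v := by ext p; simp [mul_sum, mul_left_comm]

lemma mpcMap_apply (A : Matrix (Fin s) (Fin h) F) (v : Fin s → Fin m → F) (j : Fin h)
    (t : Fin m) : mpcMap A v (j, t) = ((fun i => v i t) ᵥ* A) j := by
  simp [mpcMap, Matrix.vecMul, dotProduct, mul_comm]

lemma mpcMap_single_apply (A : Matrix (Fin s) (Fin h) F) (i : Fin s)
    (u : Fin m → F) (p : Fin h × Fin m) : mpcMap A (Pi.single i u) p = A i p.1 * u p.2 := by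
  simp [mpcMap, Pi.single_apply, ite_apply, mul_ite]

def mpcCode (C : Fin s → Submodule F (Fin m → F)) (A : Matrix (Fin s) (Fin h) F) :
    Submodule F (Fin h × Fin m → F) :=
  LinearMap.range (mpcMap A ∘ₗ LinearMap.piMap fun i => (C i).subtype)

variable {C : Fin s → Submodule F (Fin m → F)} {A : Matrix (Fin s) (Fin h) F}

lemma mem_mpcCode {p : Fin h × Fin m → F} :
    p ∈ mpcCode C A ↔ ∃ v : Fin s → Fin m → F, (∀ i, v i ∈ C i) ∧ mpcMap A v = p :=
  ⟨fun ⟨w, hw⟩ => ⟨fun i => w i, fun i => (w i).2, hw⟩,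
    fun ⟨v, hv, hvp⟩ => ⟨fun i => ⟨v i, hv i⟩, hvp⟩⟩

lemma coe_mpcCode : (mpcCode C A : Set (Fin h × Fin m → F)) = mpcSet (fun i => C i) A := by
  ext p
  simp only [SetLike.mem_coe, mem_mpcCode, mpcSet, Set.mem_ofPred_eq, funext_iff]
  exact exists_congr fun v => and_congr_right fun _ => forall_congr' fun _ => eq_comm

lemma mpcMap_single_mem_mpcCode {i : Fin s} {u : Fin m → F} (hu : u ∈ C i) :
    mpcMap A (Pi.single i u) ∈ mpcCode C A := by
  refine mem_mpcCode.2 ⟨_, fun i' => ?_, rfl⟩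
  rcases eq_or_ne i' i with rfl | hne
  · simpa using hu
  · simp [hne]

namespace IsNSC

variable (hA : IsNSC A)
include hA

/-- `ℓ + 1` zero entries would exhibit a singular `(ℓ + 1)`-minor on the first `ℓ + 1` rows. -/
lemma sub_le_card_support_vecMul [DecidableEq F] {y : Fin s → F} {ℓ : Fin s} (hℓ : y ℓ ≠ 0)
    (hy : ∀ i, ℓ < i → y i = 0) : h - ℓ ≤ #{j | (y ᵥ* A) j ≠ 0} := by
  by_contra hlt
  have hsplit := card_filter_add_card_filter_not (s := univ) fun j => (y ᵥ* A) j = 0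
  simp only [← ne_eq, card_univ, Fintype.card_fin] at hsplit
  obtain ⟨Z, hZ, hZcard⟩ := exists_subset_card_eq (s := {j | (y ᵥ* A) j = 0})
    (n := ℓ + 1) (by omega)
  have hℓs : (ℓ : ℕ) + 1 ≤ s := ℓ.isLt
  let c := Z.orderEmbOfFin hZcard
  have hminor := hA _ hℓs ℓ.succ_pos c c.strictMono
  have hzero : (fun r => y (Fin.castLE hℓs r)) ᵥ*
      Matrix.of (fun r t : Fin (ℓ + 1) => A (Fin.castLE hℓs r) (c t)) = 0 := by
    funext t
    have hct : (y ᵥ* A) (c t) = 0 := (mem_filter.1 (hZ (Z.orderEmbOfFin_mem hZcard t))).2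
    rw [Pi.zero_apply, ← hct]
    show ∑ r, y (Fin.castLE hℓs r) * A (Fin.castLE hℓs r) (c t) = ∑ i, y i * A i (c t)
    refine Fintype.sum_of_injective _ (Fin.castLE_injective hℓs) _ _ (fun i hi => ?_)
      fun _ => rfl
    rw [hy i (by by_contra hi'; exact hi ⟨⟨i, by omega⟩, rfl⟩), zero_mul]
  exact hℓ (congrFun (Matrix.eq_zero_of_vecMul_eq_zero hminor hzero) (Fin.last ℓ))

lemma eq_zero_of_vecMul_eq_zero (hsh : s ≤ h) {y : Fin s → F} (hy : y ᵥ* A = 0) : y = 0 := by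
  classical
  by_contra hne
  obtain ⟨ℓ, hℓ, hlast⟩ := exists_last_ne_zero hne
  have := hA.sub_le_card_support_vecMul hℓ hlast
  simp [hy] at this
  omega

lemma mpcMap_injective (hsh : s ≤ h) : Function.Injective (mpcMap (m := m) A) := by
  rw [← LinearMap.ker_eq_bot, LinearMap.ker_eq_bot']
  intro v hv
  funext i t
  have hcol : (fun i => v i t) ᵥ* A = 0 := funext fun j => by
    rw [← mpcMap_apply, hv]; rfl
  exact congrFun (hA.eq_zero_of_vecMul_eq_zero hsh hcol) i

lemma finrank_mpcCode (hsh : s ≤ h) :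
    Module.finrank F (mpcCode C A) = ∑ i, Module.finrank F (C i) := by
  rw [mpcCode, LinearMap.finrank_range_of_inj, Module.finrank_pi_fintype]
  exact (hA.mpcMap_injective hsh).comp (Function.Injective.piMap fun i => (C i).injective_subtype)

lemma sub_mul_hammingNorm_le [DecidableEq F] {v : Fin s → Fin m → F} {ℓ : Fin s}
    (hlast : ∀ i, ℓ < i → v i = 0) :
    (h - ℓ) * hammingNorm (v ℓ) ≤ hammingNorm (mpcMap A v) := by
  rw [hammingNorm_eq_sum_hammingNorm_col, hammingNorm, card_filter, mul_sum]
  refine sum_le_sum fun t _ => ?_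
  split_ifs with ht
  · simpa [mpcMap_apply, hammingNorm] using
      hA.sub_le_card_support_vecMul (y := fun i => v i t) ht fun i hi => by simp [hlast i hi]
  · simp

lemma sInf_le_dminS_mpcCode [DecidableEq F] (hsh : s ≤ h) (hC : ∃ i, C i ≠ ⊥) :
    sInf {w | ∃ i : Fin s, w = (h - i) * dminS (C i : Set (Fin m → F))} ≤
      dminS (mpcCode C A : Set (Fin h × Fin m → F)) := by
  obtain ⟨i, hi⟩ := hC
  obtain ⟨u, hu, hu0⟩ := Submodule.exists_mem_ne_zero_of_ne_bot hi
  refine le_dminS ⟨_, mpcMap_single_mem_mpcCode hu, ?_⟩ fun p hp hp0 => ?_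
  · rw [Ne, ← map_zero (mpcMap A), (hA.mpcMap_injective hsh).eq_iff]
    simpa using hu0
  obtain ⟨v, hv, rfl⟩ := mem_mpcCode.1 hp
  obtain ⟨ℓ, hℓ, hlast⟩ := exists_last_ne_zero (y := v) (by rintro rfl; simp at hp0)
  refine le_trans (Nat.sInf_le ⟨ℓ, rfl⟩) ?_
  calc (h - ℓ) * dminS (C ℓ : Set (Fin m → F))
      ≤ (h - ℓ) * hammingNorm (v ℓ) := Nat.mul_le_mul_left _ (dminS_le_hammingNorm (hv ℓ) hℓ)
    _ ≤ _ := hA.sub_mul_hammingNorm_le hlast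

end IsNSC

end MatrixProductCode

section CharacterMatrix

variable {F : Type*} [Field F] {h s m : ℕ} [NeZero h] {ψ : AddChar (ZMod h) F}

def charMatrix (ψ : AddChar (ZMod h) F) (e : Fin s → ZMod h) : Matrix (Fin s) (Fin h) F :=
  Matrix.of fun i j => ψ (e i * ((j : ℕ) : ZMod h))

omit [NeZero h] in
lemma natCast_injective_fin : Function.Injective fun j : Fin h => ((j : ℕ) : ZMod h) :=
  fun j j' hjj' => Fin.ext <| by
    simpa [ZMod.val_natCast_of_lt j.isLt, ZMod.val_natCast_of_lt j'.isLt] using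
      congrArg ZMod.val hjj'

lemma AddChar.IsPrimitive.injective_zmod (hψ : ψ.IsPrimitive) : Function.Injective ψ := by
  intro a b hab
  rw [← sub_eq_zero, ← hψ.zmod_char_eq_one_iff, AddChar.map_sub_eq_div, hab,
    div_self (ψ.val_isUnit b).ne_zero]

lemma isNSC_charMatrix (hψ : ψ.IsPrimitive) {e : Fin s → ZMod h} (he : Function.Injective e)
    (hint : ∀ i ≤ s, ∃ a : ZMod h, ∀ r : Fin s, (r : ℕ) < i → ∃ d < i, e r = a + d) :
    IsNSC (charMatrix ψ e) := by
  intro i hi _ c hc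
  obtain ⟨a, ha⟩ := hint i hi
  choose d hdi hd using fun r : Fin i => ha (Fin.castLE hi r) r.isLt
  have hσ : Function.Injective fun r => (⟨d r, hdi r⟩ : Fin i) := fun r r' hrr' =>
    Fin.castLE_injective hi <| he <| by
      rw [hd, hd, show d r = d r' from congrArg Fin.val hrr']
  let σ := Equiv.ofBijective _ (Finite.injective_iff_bijective.1 hσ)
  let x : Fin i → F := fun t => ψ ((c t : ℕ) : ZMod h)
  have hx : Function.Injective x :=
    (hψ.injective_zmod.comp natCast_injective_fin).comp hc.injective
  have hminor : (Matrix.of fun r t => charMatrix ψ e (Fin.castLE hi r) (c t)) =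
      Matrix.of fun r t => ψ (a * ((c t : ℕ) : ZMod h)) *
        ((Matrix.vandermonde x)ᵀ.submatrix σ id) r t := by
    ext r t
    simp [charMatrix, x, σ, hd, add_mul, AddChar.map_add_eq_mul, ← nsmul_eq_mul,
      AddChar.map_nsmul_eq_pow]
  rw [hminor, Matrix.det_mul_row, Matrix.det_permute, Matrix.det_transpose]
  refine mul_ne_zero (prod_ne_zero_iff.2 fun t _ => (ψ.val_isUnit _).ne_zero)
    (mul_ne_zero ?_ (Matrix.det_vandermonde_ne_zero_iff.2 hx))
  exact ((Equiv.Perm.sign σ).isUnit.map (Int.castRingHom F)).ne_zero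

def charTransform (ψ : AddChar (ZMod h) F) (x : Fin h × Fin m → F) (f : ZMod h) : Fin m → F :=
  fun t => ∑ j : Fin h, x (j, t) * ψ (f * ((j : ℕ) : ZMod h))

omit [NeZero h] in
lemma charTransform_mem_dualE {C : Fin s → Submodule F (Fin m → F)} {e : Fin s → ZMod h}
    {x : Fin h × Fin m → F} (hx : x ∈ dualE (mpcCode C (charMatrix ψ e) : Set _)) (i : Fin s) :
    charTransform ψ x (e i) ∈ dualE (C i : Set (Fin m → F)) := by
  intro u hu
  have hxu := hx _ (mpcMap_single_mem_mpcCode (A := charMatrix ψ e) hu)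
  simp only [mpcMap_single_apply, charMatrix, Matrix.of_apply, Fintype.sum_prod_type] at hxu
  rw [sum_comm] at hxu
  simpa [charTransform, mul_sum, mul_comm, mul_left_comm] using hxu

lemma sum_mul_charTransform_neg (hψ : ψ.IsPrimitive) (x : Fin h × Fin m → F) (j : Fin h)
    (t : Fin m) :
    ∑ f, ψ (f * ((j : ℕ) : ZMod h)) * charTransform ψ x (-f) t = h * x (j, t) := by
  classical
  have hswap : ∀ j' : Fin h, ∑ f, ψ (f * ((j : ℕ) : ZMod h)) *
      (x (j', t) * ψ (-f * ((j' : ℕ) : ZMod h))) =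
        x (j', t) * ∑ f, ψ (f * (((j : ℕ) : ZMod h) - ((j' : ℕ) : ZMod h))) := fun j' => by
    rw [mul_sum]
    refine sum_congr rfl fun f _ => ?_
    rw [mul_sub, sub_eq_add_neg, ← neg_mul, AddChar.map_add_eq_mul]
    ring
  simp only [charTransform, mul_sum]
  rw [sum_comm]
  simp only [hswap, AddChar.sum_mulShift _ hψ, sub_eq_zero,
    natCast_injective_fin.eq_iff, ZMod.card]
  simp [mul_comm]

theorem dualE_mpcCode_charMatrix_subset (hψ : ψ.IsPrimitive) (hh : (h : F) ≠ 0)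
    {e : Fin s → ZMod h} (he : Function.Injective e) {C : Fin s → Submodule F (Fin m → F)}
    (hout : ∀ f ∉ Set.range e, ∃ i, e i = -f ∧ C i = ⊤)
    (hpair : ∀ i, C i = ⊤ ∨ ∃ i', e i' = -e i ∧ dualE (C i' : Set (Fin m → F)) ⊆ C i) :
    dualE (mpcCode C (charMatrix ψ e) : Set (Fin h × Fin m → F)) ⊆ mpcCode C (charMatrix ψ e) := by
  classical
  intro x hx
  have hdual := charTransform_mem_dualE hx
  have hmem : ∀ i, charTransform ψ x (-e i) ∈ C i := fun i => by
    rcases hpair i with htop | ⟨i', hi', hsub⟩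
    · simp [htop]
    · exact hi' ▸ hsub (hdual i')
  have hvanish : ∀ f ∉ Set.range e, charTransform ψ x (-f) = 0 := fun f hf => by
    obtain ⟨i, hi, htop⟩ := hout f hf
    have hi' := hdual i
    rw [htop, Submodule.top_coe, hi] at hi'
    exact eq_zero_of_mem_dualE_univ hi'
  refine mem_mpcCode.2 ⟨fun i => (h : F)⁻¹ • charTransform ψ x (-e i),
    fun i => Submodule.smul_mem _ _ (hmem i), ?_⟩
  ext ⟨j, t⟩
  have hinv := sum_mul_charTransform_neg hψ x j t
  rw [← Fintype.sum_of_injective e he _ _ (fun f hf => by simp [hvanish f hf]) fun _ => rfl]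
    at hinv
  simp only [mpcMap, charMatrix, LinearMap.coe_mk, AddHom.coe_mk, Matrix.of_apply,
    Pi.smul_apply, smul_eq_mul, mul_left_comm _ (h : F)⁻¹, ← mul_sum, hinv,
    inv_mul_cancel_left₀ hh]

end CharacterMatrix

section RowExponent

/-- Residues chosen so that, for `t < s`, every prefix is an interval of `ZMod h`, and negation
sends the residues not taken to rows `t < h - s` and permutes the rows `h - s ≤ t < s`. -/
def rowExponent (h s t : ℕ) : ℕ :=
  if t < h - s ∧ h % 2 = 0 then h / 2 - 1 - t
  else if t = h - s ∧ h % 2 = 0 then h / 2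
  else if t ≤ h / 2 then h / 2 - t else h + h / 2 - t

variable {h s : ℕ}

lemma rowExponent_lt (hh : 0 < h) (t : ℕ) : rowExponent h s t < h := by
  unfold rowExponent; split_ifs <;> omega

lemma natCast_eq_of_eq_or_add_eq {a b : ℕ} (hab : a = b ∨ a + h = b) : (a : ZMod h) = b := by
  rcases hab with rfl | rfl <;> simp

lemma natCast_eq_neg_of_add_eq {a b : ℕ} (hab : a + b = 0 ∨ a + b = h) : (a : ZMod h) = -b := by
  refine eq_neg_of_add_eq_zero_left ?_
  rcases hab with hab | hab <;> simp [← Nat.cast_add, hab]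

def rowExponentMod (h s : ℕ) (i : Fin s) : ZMod h := rowExponent h s i

variable (hsh : s ≤ h) (h2s : h < 2 * s)
include hsh h2s

lemma rowExponent_injOn {t t' : ℕ} (ht : t < s) (ht' : t' < s)
    (htt' : rowExponent h s t = rowExponent h s t') : t = t' := by
  unfold rowExponent at htt'; split_ifs at htt' <;> omega

lemma rowExponent_interval {i : ℕ} (hi : i ≤ s) :
    ∃ a, ∀ t < i, ∃ d < i, rowExponent h s t = a + d ∨ rowExponent h s t + h = a + d := by
  let a := if h % 2 = 0 ∧ i ≤ h - s then h / 2 - i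
    else if i ≤ h / 2 + 1 then h / 2 + 1 - i else h + h / 2 + 1 - i
  refine ⟨a, fun t ht => ⟨if a ≤ rowExponent h s t then rowExponent h s t - a
    else rowExponent h s t + h - a, ?_, ?_⟩⟩ <;>
  · unfold a rowExponent; split_ifs <;> omega

lemma exists_rowExponent_eq_or_add_eq {u : ℕ} (hu : u < h) :
    ∃ t < s, rowExponent h s t = u ∨ t < h - s ∧ rowExponent h s t + u = h := by
  refine ⟨if h % 2 = 0 ∧ u = h / 2 then h - s
    else if u ≤ h / 2 then (if h % 2 = 0 ∧ s ≤ h / 2 + u then h / 2 - 1 - u else h / 2 - u)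
    else if h + h / 2 + 1 ≤ u + s then h + h / 2 - u else u - h / 2 - 1,
    by split_ifs <;> omega, ?_⟩
  unfold rowExponent; split_ifs <;> omega

lemma exists_rowExponent_add_eq_zero_or_eq {t : ℕ}
    (ht : h - s ≤ t) (hts : t < s) : ∃ t', h - s ≤ t' ∧ t' < s ∧
      (rowExponent h s t' + rowExponent h s t = 0 ∨
        rowExponent h s t' + rowExponent h s t = h) := by
  refine ⟨if h % 2 = 1 then h - 1 - t else if t = h - s then t else h - t,
    by split_ifs <;> omega, by split_ifs <;> omega, ?_⟩
  unfold rowExponent; split_ifs <;> omega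

lemma rowExponentMod_injective : Function.Injective (rowExponentMod h s) := fun i i' hii' =>
  Fin.ext <| rowExponent_injOn hsh h2s i.isLt i'.isLt <| congrArg Fin.val <|
    @natCast_injective_fin h ⟨_, rowExponent_lt (by omega) i⟩ ⟨_, rowExponent_lt (by omega) i'⟩
      hii'

lemma rowExponentMod_interval {i : ℕ} (hi : i ≤ s) :
    ∃ a : ZMod h, ∀ r : Fin s, (r : ℕ) < i → ∃ d < i, rowExponentMod h s r = a + d := by
  obtain ⟨a, ha⟩ := rowExponent_interval hsh h2s hi
  refine ⟨a, fun r hr => ?_⟩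
  obtain ⟨d, hdi, hrd⟩ := ha r hr
  exact ⟨d, hdi, by simpa [rowExponentMod] using natCast_eq_of_eq_or_add_eq hrd⟩

lemma exists_rowExponentMod_eq_neg_of_notMem_range {f : ZMod h}
    (hf : f ∉ Set.range (rowExponentMod h s)) :
    ∃ i : Fin s, (i : ℕ) < h - s ∧ rowExponentMod h s i = -f := by
  have : NeZero h := ⟨by omega⟩
  obtain ⟨t, hts, heq | ⟨ht, hsum⟩⟩ := exists_rowExponent_eq_or_add_eq hsh h2s f.val_lt
  · exact (hf ⟨⟨t, hts⟩, by simp [rowExponentMod, heq]⟩).elim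
  · exact ⟨⟨t, hts⟩, ht, by simpa [rowExponentMod] using natCast_eq_neg_of_add_eq (.inr hsum)⟩

lemma exists_rowExponentMod_eq_neg {i : Fin s} (hi : h - s ≤ i) :
    ∃ i' : Fin s, h - s ≤ i' ∧ rowExponentMod h s i' = -rowExponentMod h s i := by
  obtain ⟨t, ht, hts, hsum⟩ := exists_rowExponent_add_eq_zero_or_eq hsh h2s hi i.isLt
  exact ⟨⟨t, hts⟩, ht, natCast_eq_neg_of_add_eq hsum⟩

end RowExponent

lemma exists_isPrimitiveRoot_of_dvd_card_sub_one {F : Type*} [Field F] [Fintype F] {h : ℕ}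
    (hh : h ≠ 0) (hdvd : h ∣ Fintype.card F - 1) : ∃ ζ : F, IsPrimitiveRoot ζ h := by
  obtain ⟨g, hg⟩ := IsCyclic.exists_ofOrder_eq_natCard (α := Fˣ)
  rw [Nat.card_units, Nat.card_eq_fintype_card] at hg
  have hq : Fintype.card F - 1 ≠ 0 := by have := Fintype.one_lt_card (α := F); omega
  have hζ := (hg ▸ IsPrimitiveRoot.orderOf g).pow_of_dvd
    (Nat.div_pos (Nat.le_of_dvd (by omega) hdvd) (by omega)).ne' (Nat.div_dvd_of_dvd hdvd)
  rw [Nat.div_div_self hdvd hq] at hζ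
  exact ⟨_, IsPrimitiveRoot.coe_units_iff.2 hζ⟩

theorem stmt13_general {F : Type*} [Field F] [Fintype F] [DecidableEq F] {q h s m : ℕ}
    (hcard : Fintype.card F = q)
    (hsh : s ≤ h) (hh2s : h < 2 * s)
    (hdvd : h ∣ (q - 1))
    (C : Fin s → Submodule F (Fin m → F)) (k d : Fin s → ℕ)
    (hnz : ∀ i, C i ≠ ⊥)
    (hk : ∀ i, Module.finrank F (C i) = k i)
    (hd : ∀ i, dminS ((C i : Set (Fin m → F))) = d i)
    (hnest : ∀ i j : Fin s, h - s ≤ (i : ℕ) → i ≤ j → C j ≤ C i)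
    (hlast : ∀ i : Fin s, (i : ℕ) = s - 1 →
      dualE ((C i : Set (Fin m → F))) ⊆ (C i : Set (Fin m → F)))
    (hfull : ∀ i : Fin s, (i : ℕ) < h - s → C i = ⊤) :
    ∃ A : Matrix (Fin s) (Fin h) F, IsNSC A ∧
      ∃ S : Submodule F (Fin h × Fin m → F),
        (S : Set (Fin h × Fin m → F)) = mpcSet (fun i => (C i : Set (Fin m → F))) A ∧
        dualE (S : Set (Fin h × Fin m → F)) ⊆ (S : Set (Fin h × Fin m → F)) ∧
        Module.finrank F S = ∑ i, k i ∧
        sInf { v | ∃ i : Fin s, v = (h - (i : ℕ)) * d i } ≤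
          dminS ((S : Set (Fin h × Fin m → F))) := by
  have : NeZero h := ⟨by omega⟩
  obtain ⟨ζ, hζ⟩ := exists_isPrimitiveRoot_of_dvd_card_sub_one (NeZero.ne h) (hcard ▸ hdvd)
  have hψ := AddChar.zmodChar_primitive_of_primitive_root h hζ
  have hA := isNSC_charMatrix hψ (rowExponentMod_injective hsh hh2s)
    fun i hi => rowExponentMod_interval hsh hh2s hi
  let last : Fin s := ⟨s - 1, by omega⟩
  have hdual_sub : ∀ i i' : Fin s, h - s ≤ i → h - s ≤ i' →
      dualE (C i' : Set (Fin m → F)) ⊆ C i := fun i i' hi hi' =>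
    (dualE_anti (hnest i' last hi' (by simp [Fin.le_def, last]; omega))).trans <|
      (hlast last rfl).trans (hnest i last hi (by simp [Fin.le_def, last]; omega))
  refine ⟨_, hA, _, coe_mpcCode, dualE_mpcCode_charMatrix_subset hψ hζ.neZero'.out
    (rowExponentMod_injective hsh hh2s) (fun f hf => ?_) (fun i => ?_), ?_, ?_⟩
  · obtain ⟨i, hi, hif⟩ := exists_rowExponentMod_eq_neg_of_notMem_range hsh hh2s hf
    exact ⟨i, hif, hfull i hi⟩
  · by_cases hi : (i : ℕ) < h - s
    · exact .inl (hfull i hi)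
    obtain ⟨i', hi', hii'⟩ := exists_rowExponentMod_eq_neg hsh hh2s (i := i) (by omega)
    exact .inr ⟨i', hii', hdual_sub i i' (by omega) hi'⟩
  · simp [hA.finrank_mpcCode hsh, hk]
  · simpa [hd] using hA.sInf_le_dminS_mpcCode hsh ⟨⟨0, by omega⟩, hnz _⟩

/-- existence of an NSC `s×h` matrix giving a Euclidean dual-containing
matrix-product code, when `h ∣ q-1` and `s ≤ h < 2s`. -/
theorem stmt13 {F : Type*} [Field F] [Fintype F] [DecidableEq F] {q h s m : ℕ}
    (hchar : Odd (ringChar F)) (hcard : Fintype.card F = q)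
    (hs : 0 < s) (hsh : s ≤ h) (hh2s : h < 2 * s)
    (hdvd : h ∣ (q - 1))
    (C : Fin s → Submodule F (Fin m → F)) (k d : Fin s → ℕ)
    (hnz : ∀ i, C i ≠ ⊥)
    (hk : ∀ i, Module.finrank F (C i) = k i)
    (hd : ∀ i, dminS ((C i : Set (Fin m → F))) = d i)
    (hnest : ∀ i j : Fin s, h - s ≤ (i : ℕ) → i ≤ j → C j ≤ C i)
    (hlast : ∀ i : Fin s, (i : ℕ) = s - 1 →
      dualE ((C i : Set (Fin m → F))) ⊆ (C i : Set (Fin m → F)))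
    (hfull : ∀ i : Fin s, (i : ℕ) < h - s → C i = ⊤) :
    ∃ A : Matrix (Fin s) (Fin h) F, IsNSC A ∧
      ∃ S : Submodule F (Fin h × Fin m → F),
        (S : Set (Fin h × Fin m → F)) = mpcSet (fun i => (C i : Set (Fin m → F))) A ∧
        dualE (S : Set (Fin h × Fin m → F)) ⊆ (S : Set (Fin h × Fin m → F)) ∧
        Module.finrank F S = ∑ i, k i ∧
        sInf { v | ∃ i : Fin s, v = (h - (i : ℕ)) * d i } ≤
          dminS ((S : Set (Fin h × Fin m → F))) :=
  stmt13_general hcard hsh hh2s hdvd C k d hnz hk hd hnest hlast hfull
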